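/- In ℝ^d with the sup norm (d ≥ 2), the set consisting of the 2d−1 vectors x_i = 2e_i + e_d and x_{i+d−1} = −2e_i + e_d for i = 1, ..., d−1, together with x_{2d−1} = −3e_d, is an M-set; hence m(ℓ_∞^d) = 2d−1. -/

import Mathlib

def IsMSet (X : Type*) [NormedAddCommGroup X] (S : Set X) : Prop :=
  (∀ x ∈ S, 1 < ‖x‖) ∧ ∀ x ∈ S, ∀ y ∈ S, x ≠ y → ‖x + y‖ = 2

/-- The standard basis vector `e i` of `ℝ^d`. -/
def stdBasis (d : ℕ) (i : Fin d) : Fin d → ℝ := Pi.single i (1 : ℝ)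

/-!
Every point of an M-set `T ⊆ ℓ_∞(ι)` exceeds `1` at some signed coordinate `±x j`, and two
distinct points cannot exceed `1` at the same one, since their sum has norm `2`. So `T` injects
into the `2 * card ι` signed coordinates. If this injection were onto, every point would be
below `1` at the signed coordinates it does not claim and, when `card ι ≥ 2`, below `3` at the one
it claims; the two points claiming `x j` and `-x j` would then have a sum of norm `< 2`.

For the explicit set, the sum of two distinct points has `l`-th coordinate `±2` and all other
coordinates in `[-2, 2]`.
-/

open Function

section SignedCoord

variable {ι : Type*}

def signedCoord (x : ι → ℝ) (q : ι × Bool) : ℝ := bif q.2 then x q.1 else -x q.1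

lemma signedCoord_not (x : ι → ℝ) (j : ι) (b : Bool) :
    signedCoord x (j, !b) = -signedCoord x (j, b) := by
  cases b <;> simp [signedCoord]

lemma signedCoord_add (x y : ι → ℝ) (q : ι × Bool) :
    signedCoord (x + y) q = signedCoord x q + signedCoord y q := by
  rcases q with ⟨j, _ | _⟩ <;> simp [signedCoord, add_comm]

lemma norm_le_iff_forall_signedCoord_le [Fintype ι] {x : ι → ℝ} {r : ℝ} (hr : 0 ≤ r) :
    ‖x‖ ≤ r ↔ ∀ q, signedCoord x q ≤ r := by
  simp [pi_norm_le_iff_of_nonneg hr, abs_le, signedCoord, neg_le, and_comm]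

lemma norm_lt_iff_forall_signedCoord_lt [Fintype ι] {x : ι → ℝ} {r : ℝ} (hr : 0 < r) :
    ‖x‖ < r ↔ ∀ q, signedCoord x q < r := by
  simp [pi_norm_lt_iff hr, abs_lt, signedCoord, neg_lt, and_comm]

lemma signedCoord_le_norm [Fintype ι] (x : ι → ℝ) (q : ι × Bool) : signedCoord x q ≤ ‖x‖ :=
  (norm_le_iff_forall_signedCoord_le (norm_nonneg x)).1 le_rfl q

lemma exists_lt_signedCoord_of_lt_norm [Fintype ι] {x : ι → ℝ} {r : ℝ} (hr : 0 ≤ r)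
    (h : r < ‖x‖) : ∃ q, r < signedCoord x q := by
  by_contra! hle
  exact h.not_ge ((norm_le_iff_forall_signedCoord_le hr).2 hle)

end SignedCoord

namespace IsMSet

variable {ι : Type*} [Fintype ι] {T : Set (ι → ℝ)}

lemma signedCoord_add_le_two (hT : IsMSet (ι → ℝ) T) {x y : ι → ℝ} (hx : x ∈ T) (hy : y ∈ T)
    (hxy : x ≠ y) (q : ι × Bool) : signedCoord x q + signedCoord y q ≤ 2 := by
  rw [← signedCoord_add, ← hT.2 x hx y hy hxy]
  exact signedCoord_le_norm _ q

lemma eq_of_one_lt_signedCoord (hT : IsMSet (ι → ℝ) T) {x y : ι → ℝ} (hx : x ∈ T) (hy : y ∈ T)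
    {q : ι × Bool} (hxq : 1 < signedCoord x q) (hyq : 1 < signedCoord y q) : x = y := by
  by_contra hxy
  linarith [hT.signedCoord_add_le_two hx hy hxy q]

lemma exists_injective_one_lt_signedCoord (hT : IsMSet (ι → ℝ) T) :
    ∃ f : T → ι × Bool, Injective f ∧ ∀ x : T, 1 < signedCoord x (f x) := by
  choose f hf using fun x : T => exists_lt_signedCoord_of_lt_norm zero_le_one (hT.1 x x.2)
  exact ⟨f, fun x y hxy => Subtype.ext (hT.eq_of_one_lt_signedCoord x.2 y.2 (hf x) (hxy ▸ hf y)),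
    hf⟩

theorem finite (hT : IsMSet (ι → ℝ) T) : T.Finite := by
  obtain ⟨f, hf, -⟩ := hT.exists_injective_one_lt_signedCoord
  exact Set.finite_coe_iff.1 (Finite.of_injective f hf)

section SurjectiveClaim

variable {f : T → ι × Bool}

lemma signedCoord_lt_one_of_ne (hT : IsMSet (ι → ℝ) T) (hf : Surjective f)
    (hbig : ∀ x : T, 1 < signedCoord x (f x)) {x : T} {q : ι × Bool} (hxq : f x ≠ q) :
    signedCoord x q < 1 := by
  obtain ⟨y, rfl⟩ := hf q
  have hxy : (x : ι → ℝ) ≠ y := fun h => hxq (congrArg f (Subtype.ext h))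
  linarith [hT.signedCoord_add_le_two x.2 y.2 hxy (f y), hbig y]

lemma signedCoord_lt_three [Nontrivial ι] (hT : IsMSet (ι → ℝ) T) (hf : Surjective f)
    (hbig : ∀ x : T, 1 < signedCoord x (f x)) (x : T) (q : ι × Bool) : signedCoord x q < 3 := by
  by_cases hxq : f x = q
  · obtain ⟨j, b⟩ := q
    obtain ⟨k, hk⟩ := exists_ne j
    obtain ⟨c, hc⟩ := hf (k, true)
    have hcx : (c : ι → ℝ) ≠ x := fun h =>
      hk (congrArg Prod.fst (hc.symm.trans (Subtype.ext h ▸ hxq)))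
    have hc_not : signedCoord c (j, !b) < 1 :=
      signedCoord_lt_one_of_ne hT hf hbig (by rw [hc]; exact fun h => hk (congrArg Prod.fst h))
    rw [signedCoord_not] at hc_not
    linarith [hT.signedCoord_add_le_two x.2 c.2 hcx.symm (j, b)]
  · linarith [signedCoord_lt_one_of_ne hT hf hbig hxq]

lemma signedCoord_add_lt_two_of_apply_eq [Nontrivial ι] (hT : IsMSet (ι → ℝ) T)
    (hf : Surjective f) (hbig : ∀ x : T, 1 < signedCoord x (f x)) (x : T) {y : T} {j : ι}
    {b : Bool} (hy : f y = (j, !b)) : signedCoord x (j, b) + signedCoord y (j, b) < 2 := by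
  have hy_big := hbig y
  rw [hy, signedCoord_not] at hy_big
  linarith [signedCoord_lt_three hT hf hbig x (j, b)]

end SurjectiveClaim

theorem ncard_lt [Nontrivial ι] (hT : IsMSet (ι → ℝ) T) : T.ncard < 2 * Fintype.card ι := by
  obtain ⟨f, hf, hbig⟩ := hT.exists_injective_one_lt_signedCoord
  by_contra! hcard
  have hsurj : Surjective f := (hf.bijective_of_nat_card_le (by
    simpa [Nat.card_coe_set_eq, mul_comm] using hcard)).2
  obtain ⟨j⟩ := (inferInstance : Nonempty ι)
  obtain ⟨a, ha⟩ := hsurj (j, true)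
  obtain ⟨b, hb⟩ := hsurj (j, false)
  have hab : (a : ι → ℝ) ≠ b := fun h => by simp [Subtype.ext h, hb] at ha
  have hlt : ‖(a : ι → ℝ) + b‖ < 2 := (norm_lt_iff_forall_signedCoord_lt two_pos).2 fun q => by
    rw [signedCoord_add]
    by_cases hqa : q = (j, true)
    · subst hqa
      exact signedCoord_add_lt_two_of_apply_eq hT hsurj hbig a hb
    by_cases hqb : q = (j, false)
    · subst hqb
      rw [add_comm]
      exact signedCoord_add_lt_two_of_apply_eq hT hsurj hbig b ha
    linarith [signedCoord_lt_one_of_ne hT hsurj hbig (ha.trans_ne (Ne.symm hqa)),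
      signedCoord_lt_one_of_ne hT hsurj hbig (hb.trans_ne (Ne.symm hqb))]
  exact hlt.ne (hT.2 a a.2 b b.2 hab)

end IsMSet

lemma norm_eq_of_forall_abs_le {ι : Type*} [Fintype ι] {v : ι → ℝ} {r : ℝ} (l : ι)
    (h : ∀ k, |v k| ≤ r) (hl : |v l| = r) : ‖v‖ = r :=
  le_antisymm ((pi_norm_le_iff_of_nonneg (hl ▸ abs_nonneg _)).2 h) (hl ▸ norm_le_pi_norm v l)

section CrossMSet

variable {ι : Type*} [DecidableEq ι]

def crossPoint (l : ι) (p : {i // i ≠ l} × Bool) : ι → ℝ :=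
  (bif p.2 then (2 : ℝ) else -2) • Pi.single (p.1 : ι) 1 + Pi.single l 1

def crossMSet (l : ι) : Set (ι → ℝ) :=
  insert ((-3 : ℝ) • Pi.single l 1) (Set.range (crossPoint l))

lemma crossPoint_apply (l : ι) (p : {i // i ≠ l} × Bool) (k : ι) :
    crossPoint l p k =
      (if k = p.1 then bif p.2 then 2 else -2 else 0) + if k = l then 1 else 0 := by
  simp [crossPoint, Pi.single_apply]

lemma crossPoint_injective (l : ι) : Injective (crossPoint l) := by
  rintro ⟨⟨i, hi⟩, b⟩ ⟨⟨j, hj⟩, c⟩ h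
  have hi' := congrFun h i
  by_cases hij : i = j
  · subst hij
    cases b <;> cases c <;> first | rfl | norm_num [crossPoint_apply, hi] at hi'
  · cases b <;> simp [crossPoint_apply, hi, hij] at hi'

lemma neg_three_smul_single_notMem_range_crossPoint (l : ι) :
    (-3 : ℝ) • Pi.single l 1 ∉ Set.range (crossPoint l) := by
  rintro ⟨p, hp⟩
  have := congrFun hp l
  simp [crossPoint_apply, Ne.symm p.1.2] at this
  norm_num at this

lemma mem_crossMSet {l : ι} {x : ι → ℝ} :
    x ∈ crossMSet l ↔ (∃ i ≠ l, x = (2 : ℝ) • Pi.single i 1 + Pi.single l 1) ∨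
      (∃ i ≠ l, x = (-2 : ℝ) • Pi.single i 1 + Pi.single l 1) ∨ x = (-3 : ℝ) • Pi.single l 1 := by
  constructor
  · rintro (rfl | ⟨⟨⟨i, hi⟩, _ | _⟩, rfl⟩)
    · exact Or.inr (Or.inr rfl)
    · exact Or.inr (Or.inl ⟨i, hi, rfl⟩)
    · exact Or.inl ⟨i, hi, rfl⟩
  · rintro (⟨i, hi, rfl⟩ | ⟨i, hi, rfl⟩ | rfl)
    · exact Or.inr ⟨(⟨i, hi⟩, true), rfl⟩
    · exact Or.inr ⟨(⟨i, hi⟩, false), rfl⟩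
    · exact Or.inl rfl

lemma norm_crossPoint_add_crossPoint [Fintype ι] (l : ι) {p q : {i // i ≠ l} × Bool}
    (hpq : p ≠ q) : ‖crossPoint l p + crossPoint l q‖ = 2 := by
  rcases p with ⟨⟨i, hi⟩, b⟩
  rcases q with ⟨⟨j, hj⟩, c⟩
  have hl : |(crossPoint l (⟨i, hi⟩, b) + crossPoint l (⟨j, hj⟩, c)) l| = 2 := by
    norm_num [crossPoint_apply, hi.symm, hj.symm]
  refine norm_eq_of_forall_abs_le l (fun k => ?_) hl
  rcases eq_or_ne k l with rfl | hkl
  · exact hl.le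
  simp only [Pi.add_apply, crossPoint_apply, if_neg hkl, add_zero]
  split_ifs with hki hkj hkj
  · subst hki hkj
    cases b <;> cases c <;> simp_all
  all_goals cases b <;> cases c <;> norm_num

lemma norm_crossPoint_add_apex [Fintype ι] (l : ι) (p : {i // i ≠ l} × Bool) :
    ‖crossPoint l p + (-3 : ℝ) • Pi.single l 1‖ = 2 := by
  rcases p with ⟨⟨i, hi⟩, b⟩
  have hl : |(crossPoint l (⟨i, hi⟩, b) + (-3 : ℝ) • Pi.single l 1 : ι → ℝ) l| = 2 := by
    norm_num [crossPoint_apply, hi.symm]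
  refine norm_eq_of_forall_abs_le l (fun k => ?_) hl
  rcases eq_or_ne k l with rfl | hkl
  · exact hl.le
  simp only [Pi.add_apply, crossPoint_apply, Pi.smul_apply, Pi.single_apply, if_neg hkl]
  split_ifs <;> cases b <;> norm_num

lemma one_lt_norm_crossPoint [Fintype ι] (l : ι) (p : {i // i ≠ l} × Bool) :
    1 < ‖crossPoint l p‖ := by
  refine lt_of_lt_of_le ?_ (norm_le_pi_norm (crossPoint l p) p.1)
  rcases p with ⟨⟨i, hi⟩, _ | _⟩ <;> norm_num [crossPoint_apply, hi]

lemma isMSet_crossMSet [Fintype ι] (l : ι) : IsMSet (ι → ℝ) (crossMSet l) := by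
  refine ⟨?_, ?_⟩
  · rintro x (rfl | ⟨p, rfl⟩)
    · norm_num [norm_smul, Pi.norm_single]
    · exact one_lt_norm_crossPoint l p
  · rintro x (rfl | ⟨p, rfl⟩) y (rfl | ⟨q, rfl⟩) hxy
    · exact absurd rfl hxy
    · rw [add_comm]
      exact norm_crossPoint_add_apex l q
    · exact norm_crossPoint_add_apex l p
    · exact norm_crossPoint_add_crossPoint l (fun h => hxy (h ▸ rfl))

lemma ncard_crossMSet [Fintype ι] (l : ι) :
    (crossMSet l).ncard = 2 * (Fintype.card ι - 1) + 1 := by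
  rw [crossMSet, Set.ncard_insert_of_notMem (neg_three_smul_single_notMem_range_crossPoint l),
    Set.ncard_range_of_injective (crossPoint_injective l)]
  simp [mul_comm]

end CrossMSet

theorem mset_sup_norm_explicit (d : ℕ) (hd : 2 ≤ d) :
    IsMSet (Fin d → ℝ)
      {x | (∃ i : Fin d, (i : ℕ) < d - 1 ∧
              x = (2 : ℝ) • stdBasis d i + stdBasis d ⟨d - 1, by omega⟩) ∨
           (∃ i : Fin d, (i : ℕ) < d - 1 ∧
              x = (-2 : ℝ) • stdBasis d i + stdBasis d ⟨d - 1, by omega⟩) ∨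
           x = (-3 : ℝ) • stdBasis d ⟨d - 1, by omega⟩} ∧
    ({x | (∃ i : Fin d, (i : ℕ) < d - 1 ∧
              x = (2 : ℝ) • stdBasis d i + stdBasis d ⟨d - 1, by omega⟩) ∨
           (∃ i : Fin d, (i : ℕ) < d - 1 ∧
              x = (-2 : ℝ) • stdBasis d i + stdBasis d ⟨d - 1, by omega⟩) ∨
           x = (-3 : ℝ) • stdBasis d ⟨d - 1, by omega⟩} : Set (Fin d → ℝ)).ncard = 2 * d - 1 ∧
    ∀ T : Set (Fin d → ℝ), IsMSet (Fin d → ℝ) T → T.Finite ∧ T.ncard ≤ 2 * d - 1 := by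
  set l : Fin d := ⟨d - 1, by omega⟩
  have hlt : ∀ i : Fin d, (i : ℕ) < d - 1 ↔ i ≠ l := fun i => by
    rw [Ne, Fin.ext_iff, show (l : ℕ) = d - 1 from rfl]
    omega
  simp only [stdBasis, hlt, ← mem_crossMSet, Set.ofPred_mem_eq]
  have : Nontrivial (Fin d) := Fin.nontrivial_iff_two_le.2 hd
  refine ⟨isMSet_crossMSet l, ?_, fun T hT => ⟨hT.finite, ?_⟩⟩
  · rw [ncard_crossMSet, Fintype.card_fin]
    omega
  · have := hT.ncard_lt
    rw [Fintype.card_fin] at this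
    omega
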